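/- arXiv:1212.0343 — 8 statements merged into one kernel-verified Lean document; each statement's English description precedes it below -/
import Mathlib

section
/- Let θ be a G-commutation function on a finite group G. Then the map ψ: G → {±1} defined by ψ(g) = θ(g,g) is a group homomorphism; consequently H = {g ∈ G : θ(g,g) = 1} is a subgroup of G of index at most 2. -/
/-- The ordered product of a tuple of elements of a (not necessarily commutative) monoid. -/
def tupProd {M : Type*} [Monoid M] {n : ℕ} (a : Fin n → M) : M := (List.ofFn a).prod

/-- `σ ∈ Sym(ḡ)`: the permutation `σ` is admissible for the tuple `ḡ`, i.e. the products
`g_1 ⋯ g_n` and `g_{σ(1)} ⋯ g_{σ(n)}` coincide. -/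
def Admissible {G : Type*} [Group G] {n : ℕ} (g : Fin n → G) (σ : Equiv.Perm (Fin n)) : Prop :=
  tupProd g = tupProd (g ∘ σ)

/-- `θ` is the commutation function of the regular `G`-grading `Ag` on the `F`-algebra `A`. -/
structure IsRegularGradingWith (F : Type) [Field F] (G : Type) [Group G] [DecidableEq G]
    (A : Type) [Ring A] [Algebra F A] (Ag : G → Submodule F A)
    (θ : ∀ n : ℕ, (Fin n → G) → Equiv.Perm (Fin n) → Fˣ) : Prop where
  internal : DirectSum.IsInternal Ag
  mul_mem : ∀ g h : G, ∀ a ∈ Ag g, ∀ b ∈ Ag h, a * b ∈ Ag (g * h)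
  regular : ∀ (n : ℕ) (g : Fin n → G), ∃ a : Fin n → A,
      (∀ i, a i ∈ Ag (g i)) ∧ tupProd a ≠ 0
  comm : ∀ (n : ℕ) (g : Fin n → G) (σ : Equiv.Perm (Fin n)), Admissible g σ →
      ∀ a : Fin n → A, (∀ i, a i ∈ Ag (g i)) →
        tupProd a = (θ n g σ : F) • tupProd (a ∘ σ)

/-- `θ` is a `G`-commutation function: it satisfies the cocycle condition
`θ(ḡ,σ)·θ(ḡ^σ,τ) = θ(ḡ,στ)` and (equivalently to the substitution and multiplicativity
conditions of Lemma 2.6 of Aljadeff–David) it is realized as the commutation function of a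
regular `G`-grading on some `F`-algebra. -/
def IsGCommFunction (F : Type) [Field F] (G : Type) [Group G] [DecidableEq G]
    (θ : ∀ n : ℕ, (Fin n → G) → Equiv.Perm (Fin n) → Fˣ) : Prop :=
  (∀ (n : ℕ) (g : Fin n → G) (σ τ : Equiv.Perm (Fin n)),
      Admissible g σ → Admissible (g ∘ σ) τ →
      θ n g σ * θ n (g ∘ σ) τ = θ n g (σ * τ)) ∧
  ∃ (A : Type) (_ : Ring A) (_ : Algebra F A) (Ag : G → Submodule F A),
    IsRegularGradingWith F G A Ag θ

/-- `θ(g,h)` for commuting `g, h`: the value of `θ` on the pair `(g,h)` with the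
transposition `(1 2)`. -/
def pairTheta {F : Type} [Field F] {G : Type} [Group G]
    (θ : ∀ n : ℕ, (Fin n → G) → Equiv.Perm (Fin n) → Fˣ) (g h : G) : Fˣ :=
  θ 2 ![g, h] (Equiv.swap 0 1)

/-!
Realize `θ` as the commutation function of a regular grading `A = ⨁ A_g`, so that
`u v = θ(g,h) v u` for homogeneous `u ∈ A_g`, `v ∈ A_h` with `g h = h g`, and regularity
supplies homogeneous tuples with nonzero product on which scalars can be compared.
Comparing two rearrangements of `a a' c` with `a, a' ∈ A_1` gives `θ(1,k)² = θ(1,k)`, so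
`A_1` commutes with every homogeneous element; similarly `θ(k,k⁻¹) = θ(k,k)`.
For `ψ(gh) = ψ(g) ψ(h)`, take `a_i ∈ A_g`, `b_i ∈ A_h`, `d_i ∈ A_{(gh)⁻¹}` with
`a₁ b₁ d₁ a₂ b₂ d₂ ≠ 0` and move it to `d₁ a₁ b₁ a₂ b₂ d₂` in two ways: commuting the
degree-one block `d₁ a₂ b₂` past `a₁ b₁` and then swapping `a₂ b₂` with `a₁ b₁` costs
`ψ(gh)`; commuting `b₁ d₁ a₂` past `a₁`, swapping `a₂` with `a₁` and then `b₁` with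
`d₁ a₁ ∈ A_{h⁻¹}` costs `ψ(g) ψ(h)`. Finally `ψ² = 1`, so `ψ` lands in the square roots
of unity of `F` and its kernel has index at most 2.
-/

lemma tupProd_fin_two {M : Type*} [Monoid M] (a : Fin 2 → M) : tupProd a = a 0 * a 1 := by
  simp [tupProd, List.ofFn_succ]

lemma tupProd_fin_three {M : Type*} [Monoid M] (a : Fin 3 → M) :
    tupProd a = a 0 * a 1 * a 2 := by
  simp [tupProd, List.ofFn_succ, mul_assoc]

lemma tupProd_fin_six {M : Type*} [Monoid M] (a : Fin 6 → M) :
    tupProd a = a 0 * a 1 * a 2 * a 3 * a 4 * a 5 := by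
  simp [tupProd, List.ofFn_succ, mul_assoc]

lemma units_eq_of_smul_eq_smul {F A : Type*} [Field F] [Ring A] [Algebra F A] {c d : Fˣ}
    {x : A} (hx : x ≠ 0) (h : (c : F) • x = (d : F) • x) : c = d :=
  Units.ext (smul_left_injective F hx h)

lemma Units.eq_one_or_eq_neg_one_of_mul_self_eq_one {R : Type*} [Ring R] [NoZeroDivisors R]
    {u : Rˣ} (h : u * u = 1) : u = 1 ∨ u = -1 := by
  simpa only [Units.ext_iff, Units.val_one, Units.val_neg] using
    mul_self_eq_one_iff.mp (congrArg Units.val h)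

namespace IsRegularGradingWith

variable {F : Type} [Field F] {G : Type} [Group G] [DecidableEq G]
  {A : Type} [Ring A] [Algebra F A] {Ag : G → Submodule F A}
  {θ : ∀ n : ℕ, (Fin n → G) → Equiv.Perm (Fin n) → Fˣ}

lemma exists_mul_ne_zero (hreg : IsRegularGradingWith F G A Ag θ) (g₁ g₂ : G) :
    ∃ a₁ ∈ Ag g₁, ∃ a₂ ∈ Ag g₂, a₁ * a₂ ≠ 0 := by
  obtain ⟨a, ha, hne⟩ := hreg.regular 2 ![g₁, g₂]
  exact ⟨a 0, ha 0, a 1, ha 1, by rwa [tupProd_fin_two] at hne⟩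

lemma exists_mul_mul_ne_zero (hreg : IsRegularGradingWith F G A Ag θ) (g₁ g₂ g₃ : G) :
    ∃ a₁ ∈ Ag g₁, ∃ a₂ ∈ Ag g₂, ∃ a₃ ∈ Ag g₃, a₁ * a₂ * a₃ ≠ 0 := by
  obtain ⟨a, ha, hne⟩ := hreg.regular 3 ![g₁, g₂, g₃]
  exact ⟨a 0, ha 0, a 1, ha 1, a 2, ha 2, by rwa [tupProd_fin_three] at hne⟩

lemma exists_mul_mul_mul_mul_mul_ne_zero (hreg : IsRegularGradingWith F G A Ag θ)
    (g₁ g₂ g₃ g₄ g₅ g₆ : G) :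
    ∃ a₁ ∈ Ag g₁, ∃ a₂ ∈ Ag g₂, ∃ a₃ ∈ Ag g₃, ∃ a₄ ∈ Ag g₄, ∃ a₅ ∈ Ag g₅, ∃ a₆ ∈ Ag g₆,
      a₁ * a₂ * a₃ * a₄ * a₅ * a₆ ≠ 0 := by
  obtain ⟨a, ha, hne⟩ := hreg.regular 6 ![g₁, g₂, g₃, g₄, g₅, g₆]
  exact ⟨a 0, ha 0, a 1, ha 1, a 2, ha 2, a 3, ha 3, a 4, ha 4, a 5, ha 5,
    by rwa [tupProd_fin_six] at hne⟩

lemma mul_eq_pairTheta_smul (hreg : IsRegularGradingWith F G A Ag θ) {g h : G}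
    (hgh : Commute g h) {u v : A} (hu : u ∈ Ag g) (hv : v ∈ Ag h) :
    u * v = (pairTheta θ g h : F) • (v * u) := by
  have hswap : ![g, h] ∘ (Equiv.swap 0 1 : Equiv.Perm (Fin 2)) = ![h, g] := by
    funext i; fin_cases i <;> rfl
  have hadm : Admissible ![g, h] (Equiv.swap 0 1) := by
    rw [Admissible, hswap, tupProd_fin_two, tupProd_fin_two]
    exact hgh.eq
  have := hreg.comm 2 ![g, h] (Equiv.swap 0 1) hadm ![u, v] (by
    intro i; fin_cases i <;> assumption)
  rwa [tupProd_fin_two, tupProd_fin_two] at this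

lemma pairTheta_self_mul_self (hreg : IsRegularGradingWith F G A Ag θ) (k : G) :
    pairTheta θ k k * pairTheta θ k k = 1 := by
  obtain ⟨u, hu, v, hv, huv⟩ := hreg.exists_mul_ne_zero k k
  refine units_eq_of_smul_eq_smul huv ?_
  calc ((pairTheta θ k k * pairTheta θ k k : Fˣ) : F) • (u * v)
      = (pairTheta θ k k : F) • ((pairTheta θ k k : F) • (u * v)) := by
        rw [Units.val_mul, mul_smul]
    _ = ((1 : Fˣ) : F) • (u * v) := by
        rw [← hreg.mul_eq_pairTheta_smul (.refl k) hv hu,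
          ← hreg.mul_eq_pairTheta_smul (.refl k) hu hv, Units.val_one, one_smul]

lemma pairTheta_one_left (hreg : IsRegularGradingWith F G A Ag θ) (k : G) :
    pairTheta θ 1 k = 1 := by
  set β := pairTheta θ 1 k
  have hcomm : ∀ {u w : A}, u ∈ Ag 1 → w ∈ Ag k → u * w = (β : F) • (w * u) :=
    hreg.mul_eq_pairTheta_smul (Commute.one_left k)
  obtain ⟨a, ha, a', ha', c, hc, hne⟩ := hreg.exists_mul_mul_ne_zero 1 1 k
  have haa' : a * a' ∈ Ag 1 := by simpa using hreg.mul_mem 1 1 a ha a' ha'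
  have hX : c * a * a' ≠ 0 := by
    rw [hcomm haa' hc, ← mul_assoc] at hne
    exact right_ne_zero_of_smul hne
  refine mul_eq_left.mp (units_eq_of_smul_eq_smul (c := β * β) (d := β) hX ?_)
  calc ((β * β : Fˣ) : F) • (c * a * a') = a * (a' * c) := by
        rw [hcomm ha' hc, mul_smul_comm, ← mul_assoc, hcomm ha hc, smul_mul_assoc,
          smul_smul, Units.val_mul]
    _ = (β : F) • (c * a * a') := by
        rw [← mul_assoc, hcomm haa' hc, mul_assoc]

lemma commute_of_mem_one (hreg : IsRegularGradingWith F G A Ag θ) {k : G} {u w : A}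
    (hu : u ∈ Ag 1) (hw : w ∈ Ag k) : Commute u w := by
  rw [Commute, SemiconjBy, hreg.mul_eq_pairTheta_smul (Commute.one_left k) hu hw,
    hreg.pairTheta_one_left, Units.val_one, one_smul]

lemma pairTheta_inv_right (hreg : IsRegularGradingWith F G A Ag θ) (k : G) :
    pairTheta θ k k⁻¹ = pairTheta θ k k := by
  obtain ⟨m, hm, b, hb, b', hb', hne⟩ := hreg.exists_mul_mul_ne_zero k⁻¹ k k
  have hmb : m * b ∈ Ag 1 := by simpa using hreg.mul_mem k⁻¹ k m hm b hb
  have hX : m * b' * b ≠ 0 := by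
    rw [mul_assoc, hreg.mul_eq_pairTheta_smul (.refl k) hb hb', mul_smul_comm,
      ← mul_assoc] at hne
    exact right_ne_zero_of_smul hne
  refine units_eq_of_smul_eq_smul hX ?_
  calc (pairTheta θ k k⁻¹ : F) • (m * b' * b) = b' * m * b := by
        rw [hreg.mul_eq_pairTheta_smul ((Commute.refl k).inv_right) hb' hm, smul_mul_assoc]
    _ = m * (b * b') := by
        rw [mul_assoc, ← (hreg.commute_of_mem_one hmb hb').eq, mul_assoc]
    _ = (pairTheta θ k k : F) • (m * b' * b) := by
        rw [hreg.mul_eq_pairTheta_smul (.refl k) hb hb', mul_smul_comm, mul_assoc]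

lemma pairTheta_mul_self (hreg : IsRegularGradingWith F G A Ag θ) (g h : G) :
    pairTheta θ (g * h) (g * h) = pairTheta θ g g * pairTheta θ h h := by
  obtain ⟨a₁, ha₁, b₁, hb₁, d₁, hd₁, a₂, ha₂, b₂, hb₂, d₂, hd₂, hne⟩ :=
    hreg.exists_mul_mul_mul_mul_mul_ne_zero g h (g * h)⁻¹ g h (g * h)⁻¹
  have hab₁ : a₁ * b₁ ∈ Ag (g * h) := hreg.mul_mem g h _ ha₁ _ hb₁
  have hab₂ : a₂ * b₂ ∈ Ag (g * h) := hreg.mul_mem g h _ ha₂ _ hb₂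
  have hdab : d₁ * (a₂ * b₂) ∈ Ag 1 := by
    simpa using hreg.mul_mem _ _ _ hd₁ _ hab₂
  have hbda : b₁ * d₁ * a₂ ∈ Ag 1 := by
    have := hreg.mul_mem _ _ _ (hreg.mul_mem _ _ _ hb₁ _ hd₁) _ ha₂
    rwa [show h * (g * h)⁻¹ * g = 1 by group] at this
  have hda : d₁ * a₁ ∈ Ag h⁻¹ := by
    simpa using hreg.mul_mem _ _ _ hd₁ _ ha₁
  set Q := d₁ * a₁ * b₁ * a₂ * b₂ * d₂
  have via_gh : a₁ * b₁ * d₁ * a₂ * b₂ * d₂ = (pairTheta θ (g * h) (g * h) : F) • Q :=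
    calc a₁ * b₁ * d₁ * a₂ * b₂ * d₂ = d₁ * (a₂ * b₂) * (a₁ * b₁) * d₂ := by
          rw [(hreg.commute_of_mem_one hdab hab₁).eq]; simp only [mul_assoc]
      _ = (pairTheta θ (g * h) (g * h) : F) • Q := by
          rw [mul_assoc d₁, hreg.mul_eq_pairTheta_smul (.refl _) hab₂ hab₁, mul_smul_comm,
            smul_mul_assoc]
          simp only [Q, mul_assoc]
  have via_g_h : a₁ * b₁ * d₁ * a₂ * b₂ * d₂ =
      ((pairTheta θ g g * pairTheta θ h h : Fˣ) : F) • Q :=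
    calc a₁ * b₁ * d₁ * a₂ * b₂ * d₂ = b₁ * d₁ * a₂ * a₁ * b₂ * d₂ := by
          rw [(hreg.commute_of_mem_one hbda ha₁).eq]; simp only [mul_assoc]
      _ = (pairTheta θ g g : F) • (b₁ * (d₁ * a₁) * a₂ * b₂ * d₂) := by
          rw [mul_assoc (b₁ * d₁), hreg.mul_eq_pairTheta_smul (.refl g) ha₂ ha₁]
          simp only [mul_smul_comm, smul_mul_assoc, mul_assoc]
      _ = ((pairTheta θ g g * pairTheta θ h h : Fˣ) : F) • Q := by
          rw [hreg.mul_eq_pairTheta_smul ((Commute.refl h).inv_right) hb₁ hda,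
            hreg.pairTheta_inv_right]
          simp only [smul_mul_assoc, smul_smul, Units.val_mul, Q, mul_assoc]
  have hQ : Q ≠ 0 := by
    rw [via_gh] at hne
    exact right_ne_zero_of_smul hne
  exact units_eq_of_smul_eq_smul hQ (via_gh.symm.trans via_g_h)

end IsRegularGradingWith

theorem theta_diag_hom_and_index_le_two_general (F : Type) [Field F] (G : Type) [Group G]
    [DecidableEq G] (θ : ∀ n : ℕ, (Fin n → G) → Equiv.Perm (Fin n) → Fˣ)
    (hθ : IsGCommFunction F G θ) :
    (∀ g : G, pairTheta θ g g = 1 ∨ pairTheta θ g g = -1) ∧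
    (∀ g h : G, pairTheta θ (g * h) (g * h) = pairTheta θ g g * pairTheta θ h h) ∧
    ∃ H : Subgroup G, (∀ g : G, g ∈ H ↔ pairTheta θ g g = 1) ∧ H.index ≤ 2 := by
  obtain ⟨-, A, _, _, Ag, hreg⟩ := hθ
  let ψ : G →* Fˣ := MonoidHom.mk' (fun g => pairTheta θ g g) hreg.pairTheta_mul_self
  have hrange : ψ.range ≤ rootsOfUnity 2 F := by
    rintro _ ⟨g, rfl⟩
    rw [mem_rootsOfUnity, sq]
    exact hreg.pairTheta_self_mul_self g
  refine ⟨fun g => Units.eq_one_or_eq_neg_one_of_mul_self_eq_one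
    (hreg.pairTheta_self_mul_self g), hreg.pairTheta_mul_self, ψ.ker, fun g => Iff.rfl, ?_⟩
  rw [Subgroup.index_ker]
  exact (Subgroup.card_le_of_le hrange).trans (card_rootsOfUnity F 2)

/-- for a `G`-commutation function on a finite group, `ψ(g) = θ(g,g)` is a
homomorphism `G → {±1}`; consequently `H = {g : θ(g,g) = 1}` is a subgroup of index ≤ 2. -/
theorem theta_diag_hom_and_index_le_two (F : Type) [Field F] (G : Type) [Group G]
    [Fintype G] [DecidableEq G] (θ : ∀ n : ℕ, (Fin n → G) → Equiv.Perm (Fin n) → Fˣ)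
    (hθ : IsGCommFunction F G θ) :
    (∀ g : G, pairTheta θ g g = 1 ∨ pairTheta θ g g = -1) ∧
    (∀ g h : G, pairTheta θ (g * h) (g * h) = pairTheta θ g g * pairTheta θ h h) ∧
    ∃ H : Subgroup G, (∀ g : G, g ∈ H ↔ pairTheta θ g g = 1) ∧ H.index ≤ 2 :=
  theta_diag_hom_and_index_le_two_general F G θ hθ
end

section
/- Let A and B be algebras graded by groups G and H respectively, with regular gradings having commutation functions θ and η. Then A ⊗ B is a regularly (G × H)-graded algebra with homogeneous components (A ⊗ B)_{(g,h)} = A_g ⊗ B_h, and its commutation function on commuting pairs satisfies (θ⊗η)((g_1,h_1),(g_2,h_2)) = θ(g_1,g_2)·η(h_1,h_2). -/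
open scoped TensorProduct

/-- The `(g,h)`-homogeneous component `A_g ⊗ B_h` of `A ⊗ B`. -/
noncomputable def tensorComponent {F : Type} [Field F] {A B : Type} [Ring A] [Algebra F A]
    [Ring B] [Algebra F B] (p : Submodule F A) (q : Submodule F B) :
    Submodule F (A ⊗[F] B) :=
  LinearMap.range (TensorProduct.map p.subtype q.subtype)

/-!
The commutation function of `A ⊗ B` is `ξ(ḡ, σ) = θ(ḡ₁, σ) η(ḡ₂, σ)`, where `ḡ₁, ḡ₂` are the
coordinate tuples of `ḡ`; admissibility in `G × H` passes to both coordinates because the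
projections are homomorphisms. Over a field every `A_g ⊗ B_h` embeds in `A ⊗ B`, and
`A ⊗ B = ⨁ A_g ⊗ B_h`. A product of pure tensors is the pure tensor of the products and
`a ⊗ b ≠ 0` for `a, b ≠ 0`, which gives regularity. The commutation identity holds on tuples of
pure tensors, being the tensor product of those of `A` and `B`; both of its sides are multilinear
in the tuple, so it extends to all homogeneous tuples, whose entries are sums of pure tensors.
-/

open scoped DirectSum

theorem tupProd_succ {M : Type*} [Monoid M] {n : ℕ} (a : Fin (n + 1) → M) :
    tupProd a = a 0 * tupProd (fun i => a i.succ) := by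
  simp [tupProd, List.ofFn_succ]

theorem map_tupProd {M N F : Type*} [Monoid M] [Monoid N] [FunLike F M N] [MonoidHomClass F M N]
    (f : F) {n : ℕ} (a : Fin n → M) : f (tupProd a) = tupProd (f ∘ a) := by
  rw [tupProd, tupProd, map_list_prod, List.map_ofFn]

theorem tupProd_tmul {R A B : Type*} [CommSemiring R] [Semiring A] [Algebra R A] [Semiring B]
    [Algebra R B] {n : ℕ} (x : Fin n → A) (y : Fin n → B) :
    tupProd (fun i => x i ⊗ₜ[R] y i) = tupProd x ⊗ₜ[R] tupProd y := by
  induction n with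
  | zero => simp [tupProd, Algebra.TensorProduct.one_def]
  | succ n ih =>
    rw [tupProd_succ, tupProd_succ x, tupProd_succ y, ih, Algebra.TensorProduct.tmul_mul_tmul]

theorem Admissible.map {G H : Type*} [Group G] [Group H] (f : G →* H) {n : ℕ} {g : Fin n → G}
    {σ : Equiv.Perm (Fin n)} (h : Admissible g σ) : Admissible (f ∘ g) σ := by
  rw [Admissible, Function.comp_assoc, ← map_tupProd, ← map_tupProd, h]

theorem TensorProduct.tmul_ne_zero {K M N : Type*} [Field K] [AddCommGroup M] [Module K M]
    [AddCommGroup N] [Module K N] {m : M} {n : N} (hm : m ≠ 0) (hn : n ≠ 0) :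
    m ⊗ₜ[K] n ≠ 0 := by
  obtain ⟨f, hf⟩ : ∃ f : Module.Dual K M, f m ≠ 0 := by
    simpa using mt (Module.forall_dual_apply_eq_zero_iff K m).1 hm
  obtain ⟨g, hg⟩ : ∃ g : Module.Dual K N, g n ≠ 0 := by
    simpa using mt (Module.forall_dual_apply_eq_zero_iff K n).1 hn
  intro h
  have := congrArg (fun z => TensorProduct.lid K K (TensorProduct.map f g z)) h
  simp only [map_tmul, lid_tmul, map_zero, smul_eq_mul] at this
  exact mul_ne_zero hf hg this

theorem MultilinearMap.eqOn_pi_span {R ι N : Type*} {M : ι → Type*} [CommSemiring R]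
    [Fintype ι] [DecidableEq ι] [∀ i, AddCommMonoid (M i)] [∀ i, Module R (M i)]
    [AddCommMonoid N] [Module R N] {f g : MultilinearMap R M N} {s : ∀ i, Set (M i)}
    (h : Set.EqOn f g (Set.univ.pi s)) :
    Set.EqOn f g (Set.univ.pi fun i => Submodule.span R (s i)) := by
  suffices H : ∀ t : Finset ι, ∀ a : ∀ i, M i,
      (∀ i ∈ t, a i ∈ Submodule.span R (s i)) → (∀ i ∉ t, a i ∈ s i) → f a = g a from
    fun a ha => H Finset.univ a (fun i _ => ha i (Set.mem_univ i)) (by simp)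
  intro t
  induction t using Finset.induction with
  | empty => exact fun a _ ha => h fun i _ => ha i (Finset.notMem_empty i)
  | @insert j t hj ih =>
    intro a hspan hs
    have hj_span : Set.EqOn (f.toLinearMap a j) (g.toLinearMap a j) (s j) := by
      intro x hx
      refine ih _ (fun i hi => ?_) (fun i hi => ?_)
      · rw [Function.update_of_ne (ne_of_mem_of_not_mem hi hj)]
        exact hspan i (Finset.mem_insert_of_mem hi)
      · rcases eq_or_ne i j with rfl | hij
        · rwa [Function.update_self]
        · rw [Function.update_of_ne hij]
          exact hs i (by simp [hij, hi])
    simpa using LinearMap.eqOn_span' hj_span (hspan j (Finset.mem_insert_self j t))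

theorem tupProd_eq_smul_comp_of_mem_span {R A : Type*} [CommSemiring R] [Semiring A]
    [Algebra R A] {n : ℕ} {s : Fin n → Set A} {σ : Equiv.Perm (Fin n)} {c : R}
    (h : ∀ a : Fin n → A, (∀ i, a i ∈ s i) → tupProd a = c • tupProd (a ∘ σ))
    {a : Fin n → A} (ha : ∀ i, a i ∈ Submodule.span R (s i)) :
    tupProd a = c • tupProd (a ∘ σ) :=
  MultilinearMap.eqOn_pi_span
    (f := MultilinearMap.mkPiAlgebraFin R n A)
    (g := c • (MultilinearMap.mkPiAlgebraFin R n A).domDomCongr σ)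
    (fun b hb => h b fun i => hb i (Set.mem_univ i)) fun i _ => ha i

theorem DirectSum.isInternal_range_of_bijective_toModule {R ι M : Type*} {N : ι → Type*}
    [Semiring R] [DecidableEq ι] [AddCommMonoid M] [Module R M] [∀ i, AddCommMonoid (N i)]
    [∀ i, Module R (N i)] (f : ∀ i, N i →ₗ[R] M) (hf : ∀ i, Function.Injective (f i))
    (h : Function.Bijective (DirectSum.toModule R ι M f)) :
    DirectSum.IsInternal fun i => LinearMap.range (f i) := by
  let e : (⨁ i, N i) ≃ₗ[R] ⨁ i, LinearMap.range (f i) :=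
    DFinsupp.mapRange.linearEquiv fun i => LinearEquiv.ofInjective (f i) (hf i)
  have hcomp : DirectSum.coeLinearMap (fun i => LinearMap.range (f i)) ∘ₗ e.toLinearMap =
      DirectSum.toModule R ι M f := by
    refine DirectSum.linearMap_ext R fun i => LinearMap.ext fun x => ?_
    simp only [LinearMap.comp_apply]
    rw [DirectSum.toModule_lof, LinearEquiv.coe_coe, DFinsupp.mapRange.linearEquiv_apply,
      DirectSum.lof_eq_of]
    erw [DFinsupp.mapRange_single (hf := fun i => map_zero _)]
    exact DirectSum.coeLinearMap_of (fun i => LinearMap.range (f i)) i _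
  have : ⇑(DirectSum.coeLinearMap fun i => LinearMap.range (f i)) =
      DirectSum.toModule R ι M f ∘ e.symm := by
    rw [← hcomp]; ext x; simp
  show Function.Bijective (DirectSum.coeLinearMap _)
  rw [this]
  exact h.comp e.symm.bijective

section TensorComponent

variable {K A B : Type} [Field K] [Ring A] [Algebra K A] [Ring B] [Algebra K B]

theorem DirectSum.IsInternal.tensorComponent {ι κ : Type*} [DecidableEq ι] [DecidableEq κ]
    {Ai : ι → Submodule K A} {Bk : κ → Submodule K B} (hA : DirectSum.IsInternal Ai)
    (hB : DirectSum.IsInternal Bk) :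
    DirectSum.IsInternal fun p : ι × κ => _root_.tensorComponent (Ai p.1) (Bk p.2) := by
  refine DirectSum.isInternal_range_of_bijective_toModule _
    (fun p => Module.Flat.tensorProduct_mapIncl_injective_of_right _ _) ?_
  let eA := LinearEquiv.ofBijective (DirectSum.coeLinearMap Ai) hA
  let eB := LinearEquiv.ofBijective (DirectSum.coeLinearMap Bk) hB
  let Φ := (TensorProduct.directSum K K (fun i => Ai i) (fun k => Bk k)).symm ≪≫ₗ
    TensorProduct.congr eA eB
  have : DirectSum.toModule K (ι × κ) (A ⊗[K] B)
      (fun p => TensorProduct.mapIncl (Ai p.1) (Bk p.2)) = Φ.toLinearMap := by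
    refine DirectSum.linearMap_ext K fun p => TensorProduct.ext' fun a b => ?_
    simp only [LinearMap.comp_apply, LinearEquiv.coe_coe, Φ, LinearEquiv.trans_apply]
    rw [DirectSum.toModule_lof, TensorProduct.directSum_symm_lof_tmul, TensorProduct.congr_tmul]
    exact congrArg₂ (· ⊗ₜ[K] ·) (DirectSum.coeLinearMap_of Ai p.1 a).symm
      (DirectSum.coeLinearMap_of Bk p.2 b).symm
  rw [this]
  exact Φ.bijective

theorem tensorComponent_eq_span (p : Submodule K A) (q : Submodule K B) :
    tensorComponent p q = Submodule.span K (Set.image2 (· ⊗ₜ[K] ·) (p : Set A) (q : Set B)) :=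
  (TensorProduct.range_mapIncl p q).trans (Submodule.map₂_eq_span_image2 _ p q)

theorem tmul_mem_tensorComponent {p : Submodule K A} {q : Submodule K B} {x : A} {y : B}
    (hx : x ∈ p) (hy : y ∈ q) : x ⊗ₜ[K] y ∈ tensorComponent p q :=
  tensorComponent_eq_span p q ▸ Submodule.subset_span (Set.mem_image2_of_mem hx hy)

theorem mul_mem_tensorComponent {p₁ p₂ p₃ : Submodule K A} {q₁ q₂ q₃ : Submodule K B}
    (hp : ∀ a ∈ p₁, ∀ a' ∈ p₂, a * a' ∈ p₃) (hq : ∀ b ∈ q₁, ∀ b' ∈ q₂, b * b' ∈ q₃) :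
    ∀ u ∈ tensorComponent p₁ q₁, ∀ v ∈ tensorComponent p₂ q₂, u * v ∈ tensorComponent p₃ q₃ := by
  rw [← Submodule.mul_le, tensorComponent_eq_span, tensorComponent_eq_span,
    Submodule.span_mul_span, Submodule.span_le]
  rintro _ ⟨_, ⟨a, ha, b, hb, rfl⟩, _, ⟨a', ha', b', hb', rfl⟩, rfl⟩
  dsimp only
  rw [Algebra.TensorProduct.tmul_mul_tmul]
  exact tmul_mem_tensorComponent (hp a ha a' ha') (hq b hb b' hb')

end TensorComponent

def tensorCommFunction {K G H : Type*} [Field K]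
    (θ : ∀ n : ℕ, (Fin n → G) → Equiv.Perm (Fin n) → Kˣ)
    (η : ∀ n : ℕ, (Fin n → H) → Equiv.Perm (Fin n) → Kˣ) :
    ∀ n : ℕ, (Fin n → G × H) → Equiv.Perm (Fin n) → Kˣ :=
  fun n g σ => θ n (Prod.fst ∘ g) σ * η n (Prod.snd ∘ g) σ

theorem pairTheta_tensorCommFunction {K G H : Type} [Field K] [Group G] [Group H]
    (θ : ∀ n : ℕ, (Fin n → G) → Equiv.Perm (Fin n) → Kˣ)
    (η : ∀ n : ℕ, (Fin n → H) → Equiv.Perm (Fin n) → Kˣ) (p q : G × H) :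
    pairTheta (tensorCommFunction θ η) p q = pairTheta θ p.1 q.1 * pairTheta η p.2 q.2 := by
  simp only [pairTheta, tensorCommFunction, ← FinVec.map_eq]
  rfl

namespace IsRegularGradingWith

variable {K G H A B : Type} [Field K] [Group G] [Group H] [DecidableEq G] [DecidableEq H]
  [Ring A] [Algebra K A] [Ring B] [Algebra K B] {Ag : G → Submodule K A} {Bh : H → Submodule K B}
  {θ : ∀ n : ℕ, (Fin n → G) → Equiv.Perm (Fin n) → Kˣ}
  {η : ∀ n : ℕ, (Fin n → H) → Equiv.Perm (Fin n) → Kˣ}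

theorem tupProd_tmul_eq_smul (hA : IsRegularGradingWith K G A Ag θ)
    (hB : IsRegularGradingWith K H B Bh η) {n : ℕ} {g : Fin n → G × H}
    {σ : Equiv.Perm (Fin n)} (hσ : Admissible g σ) {x : Fin n → A} {y : Fin n → B}
    (hx : ∀ i, x i ∈ Ag (g i).1) (hy : ∀ i, y i ∈ Bh (g i).2) :
    tupProd (fun i => x i ⊗ₜ[K] y i) =
      (tensorCommFunction θ η n g σ : K) • tupProd ((fun i => x i ⊗ₜ[K] y i) ∘ σ) := by
  have hθ := hA.comm n (Prod.fst ∘ g) σ (hσ.map (MonoidHom.fst G H)) x hx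
  have hη := hB.comm n (Prod.snd ∘ g) σ (hσ.map (MonoidHom.snd G H)) y hy
  calc tupProd (fun i => x i ⊗ₜ[K] y i)
      = ((θ n (Prod.fst ∘ g) σ : K) • tupProd (x ∘ σ)) ⊗ₜ[K]
          ((η n (Prod.snd ∘ g) σ : K) • tupProd (y ∘ σ)) := by rw [tupProd_tmul, hθ, hη]
    _ = (tensorCommFunction θ η n g σ : K) • tupProd ((fun i => x i ⊗ₜ[K] y i) ∘ σ) := by
      rw [TensorProduct.smul_tmul_smul, tensorCommFunction, Units.val_mul]
      exact congrArg _ (tupProd_tmul (x ∘ σ) (y ∘ σ)).symm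

theorem tensor (hA : IsRegularGradingWith K G A Ag θ) (hB : IsRegularGradingWith K H B Bh η) :
    IsRegularGradingWith K (G × H) (A ⊗[K] B) (fun p => tensorComponent (Ag p.1) (Bh p.2))
      (tensorCommFunction θ η) where
  internal := hA.internal.tensorComponent hB.internal
  mul_mem p q := mul_mem_tensorComponent (hA.mul_mem p.1 q.1) (hB.mul_mem p.2 q.2)
  regular n g := by
    obtain ⟨x, hx, hx0⟩ := hA.regular n (Prod.fst ∘ g)
    obtain ⟨y, hy, hy0⟩ := hB.regular n (Prod.snd ∘ g)
    refine ⟨fun i => x i ⊗ₜ[K] y i, fun i => tmul_mem_tensorComponent (hx i) (hy i), ?_⟩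
    rw [tupProd_tmul]
    exact TensorProduct.tmul_ne_zero hx0 hy0
  comm n g σ hσ c hc := by
    refine tupProd_eq_smul_comp_of_mem_span
      (s := fun i => Set.image2 (· ⊗ₜ[K] ·) (Ag (g i).1 : Set A) (Bh (g i).2 : Set B))
      (fun a ha => ?_) fun i => ?_
    · choose x hx y hy hxy using ha
      obtain rfl : a = fun i => x i ⊗ₜ[K] y i := funext fun i => (hxy i).symm
      exact hA.tupProd_tmul_eq_smul hB hσ hx hy
    · exact tensorComponent_eq_span (Ag (g i).1) (Bh (g i).2) ▸ hc i

end IsRegularGradingWith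

/-- if `A` is regularly `G`-graded with commutation function `θ` and `B` is
regularly `H`-graded with commutation function `η`, then `A ⊗ B` is regularly
`G × H`-graded with components `(A ⊗ B)_{(g,h)} = A_g ⊗ B_h`, and its commutation function
satisfies `(θ⊗η)((g₁,h₁),(g₂,h₂)) = θ(g₁,g₂)·η(h₁,h₂)` on commuting pairs. -/
theorem tensor_regular_grading (F : Type) [Field F] (G H : Type) [Group G] [Group H]
    [DecidableEq G] [DecidableEq H]
    (A B : Type) [Ring A] [Algebra F A] [Ring B] [Algebra F B]
    (Ag : G → Submodule F A) (Bh : H → Submodule F B)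
    (θ : ∀ n : ℕ, (Fin n → G) → Equiv.Perm (Fin n) → Fˣ)
    (η : ∀ n : ℕ, (Fin n → H) → Equiv.Perm (Fin n) → Fˣ)
    (hA : IsRegularGradingWith F G A Ag θ) (hB : IsRegularGradingWith F H B Bh η) :
    ∃ ξ : ∀ n : ℕ, (Fin n → G × H) → Equiv.Perm (Fin n) → Fˣ,
      IsRegularGradingWith F (G × H) (A ⊗[F] B)
        (fun p => tensorComponent (Ag p.1) (Bh p.2)) ξ ∧
      ∀ p q : G × H, Commute p q →
        pairTheta ξ p q = pairTheta θ p.1 q.1 * pairTheta η p.2 q.2 :=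
  ⟨tensorCommFunction θ η, hA.tensor hB, fun p q _ => pairTheta_tensorCommFunction θ η p q⟩
end

section
/- Let F^α G be a twisted group algebra of a finite group G over a field F, with basis {U_g} satisfying U_g U_h = α(g,h) U_{gh}. Fix g ∈ G and left coset representatives t_1,...,t_k of C_G(g) in G. If U_g U_h = U_h U_g for every h ∈ C_G(g), then a = Σ_{i=1}^k U_{t_i} U_g U_{t_i}^{-1} is central in F^α G. -/
/-- `A` is a twisted group algebra `F^α G`: the units `U g` form an `F`-basis and multiply
according to the 2-cocycle `α`, i.e. `U_g U_h = α(g,h) U_{gh}`. -/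
structure IsTwistedGroupAlgebra (F : Type) [Field F] (G : Type) [Group G]
    (A : Type) [Ring A] [Algebra F A] (U : G → Aˣ) (α : G → G → Fˣ) : Prop where
  mul_eq : ∀ g h : G, (U g : A) * (U h : A) = (α g h : F) • (U (g * h) : A)
  indep : LinearIndependent F fun g => (U g : A)
  span : Submodule.span F (Set.range fun g => (U g : A)) = ⊤

/-- `t : Fin k → G` is a system of left coset representatives of the centralizer
`C_G(g)` in `G`. -/
def IsLeftTransversalOfCentralizer {G : Type} [Group G] (g : G) {k : ℕ}
    (t : Fin k → G) : Prop :=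
  ∀ x : G, ∃! i : Fin k, (t i)⁻¹ * x ∈ Subgroup.centralizer {g}

/-- if `U_g` commutes with `U_h` for every `h ∈ C_G(g)`, then
`a = Σᵢ U_{tᵢ} U_g U_{tᵢ}⁻¹` is central in `F^α G`. -/
theorem ray_element_central (F : Type) [Field F] (G : Type) [Group G] [Fintype G]
    (A : Type) [Ring A] [Algebra F A] (U : G → Aˣ) (α : G → G → Fˣ)
    (hA : IsTwistedGroupAlgebra F G A U α) (g : G) {k : ℕ} (t : Fin k → G)
    (ht : IsLeftTransversalOfCentralizer g t)
    (hcomm : ∀ h ∈ Subgroup.centralizer {g}, (U g : A) * (U h : A) = (U h : A) * (U g : A)) :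
    ∀ x : A, (∑ i : Fin k, ((U (t i) * U g * (U (t i))⁻¹ : Aˣ) : A)) * x
      = x * (∑ i : Fin k, ((U (t i) * U g * (U (t i))⁻¹ : Aˣ) : A)) := by
  classical
  -- cancellation by a unit on the right
  have ucancel : ∀ (u : Aˣ) (a b : A), a * (u : A) = b * (u : A) → a = b := by
    intro u a b h
    have := congrArg (· * ((u⁻¹ : Aˣ) : A)) h
    simpa [mul_assoc, Units.mul_inv_cancel_right] using this
  set w : G → A := fun x => (U x : A) * (U g : A) * (((U x)⁻¹ : Aˣ) : A) with hw
  -- w is constant on left cosets of the centralizer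
  have key1 : ∀ x c : G, c ∈ Subgroup.centralizer ({g} : Set G) → w (x * c) = w x := by
    intro x c hc
    apply ucancel (U (x * c))
    have h1 : w (x * c) * (U (x * c) : A) = (U (x * c) : A) * (U g : A) := by
      simp [hw, mul_assoc, Units.inv_mul]
    rw [h1]
    apply smul_right_injective A (α x c).ne_zero
    show (α x c : F) • ((U (x * c) : A) * (U g : A))
      = (α x c : F) • (w x * (U (x * c) : A))
    rw [← smul_mul_assoc, ← mul_smul_comm, ← hA.mul_eq x c]
    calc (U x : A) * (U c : A) * (U g : A)
        = (U x : A) * ((U g : A) * (U c : A)) := by rw [mul_assoc, hcomm c hc]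
      _ = w x * ((U x : A) * (U c : A)) := by
          simp [hw, mul_assoc, Units.inv_mul_cancel_left]
  -- conjugation by any U h sends w x to w (h * x)
  have key2 : ∀ h x : G,
      (U h : A) * w x * (((U h)⁻¹ : Aˣ) : A) = w (h * x) := by
    intro h x
    apply ucancel (U h * U x)
    rw [Units.val_mul]
    calc (U h : A) * w x * (((U h)⁻¹ : Aˣ) : A) * ((U h : A) * (U x : A))
        = (U h : A) * (w x * (U x : A)) := by
          rw [← mul_assoc, Units.inv_mul_cancel_right, mul_assoc]
      _ = (U h : A) * ((U x : A) * (U g : A)) := by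
          simp [hw, mul_assoc, Units.inv_mul]
      _ = ((U h : A) * (U x : A)) * (U g : A) := by rw [mul_assoc]
      _ = ((α h x : F) • (U (h * x) : A)) * (U g : A) := by rw [hA.mul_eq]
      _ = (α h x : F) • ((U (h * x) : A) * (U g : A)) := by rw [smul_mul_assoc]
      _ = (α h x : F) • (w (h * x) * (U (h * x) : A)) := by
          simp [hw, mul_assoc, Units.inv_mul]
      _ = w (h * x) * ((α h x : F) • (U (h * x) : A)) := by rw [mul_smul_comm]
      _ = w (h * x) * ((U h : A) * (U x : A)) := by rw [← hA.mul_eq]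
  set a : A := ∑ i : Fin k, ((U (t i) * U g * (U (t i))⁻¹ : Aˣ) : A) with ha
  have ha' : a = ∑ i : Fin k, w (t i) := by
    simp [ha, hw, Units.val_mul]
  -- a commutes with each U h
  have hcomm_a : ∀ h : G, a * (U h : A) = (U h : A) * a := by
    intro h
    -- the permutation induced by left multiplication by h
    have hconj : (U h : A) * a * (((U h)⁻¹ : Aˣ) : A) = a := by
      rw [ha', Finset.mul_sum, Finset.sum_mul]
      have hterm : ∀ i : Fin k,
          (U h : A) * w (t i) * (((U h)⁻¹ : Aˣ) : A)
            = w (t (Classical.choose (ht (h * t i)).exists)) := by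
        intro i
        rw [key2]
        set j := Classical.choose (ht (h * t i)).exists with hj
        have hjc : (t j)⁻¹ * (h * t i) ∈ Subgroup.centralizer ({g} : Set G) :=
          Classical.choose_spec (ht (h * t i)).exists
        have : h * t i = t j * ((t j)⁻¹ * (h * t i)) := by group
        rw [this, key1 _ _ hjc]
      rw [Finset.sum_congr rfl fun i _ => hterm i]
      set σ : Fin k → Fin k := fun i => Classical.choose (ht (h * t i)).exists with hσ
      have hinj : Function.Injective σ := by
        intro i i' hii
        have h1 : (t (σ i))⁻¹ * (h * t i) ∈ Subgroup.centralizer ({g} : Set G) :=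
          Classical.choose_spec (ht (h * t i)).exists
        have h2 : (t (σ i'))⁻¹ * (h * t i') ∈ Subgroup.centralizer ({g} : Set G) :=
          Classical.choose_spec (ht (h * t i')).exists
        rw [hii] at h1
        have hmem : (t i)⁻¹ * (t i') ∈ Subgroup.centralizer ({g} : Set G) := by
          have := mul_mem (inv_mem h1) h2
          have heq : ((t (σ i'))⁻¹ * (h * t i))⁻¹ * ((t (σ i'))⁻¹ * (h * t i'))
              = (t i)⁻¹ * (t i') := by group
          rwa [heq] at this
        obtain ⟨j₀, _, huniq⟩ := ht (t i')
        have e1 : i = j₀ := huniq i hmem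
        have e2 : i' = j₀ := huniq i' (by simpa using (Subgroup.centralizer _).one_mem)
        rw [e1, e2]
      have hbij : Function.Bijective σ := Finite.injective_iff_bijective.mp hinj
      exact Fintype.sum_bijective σ hbij _ _ (fun i => rfl)
    calc a * (U h : A) = (U h : A) * a * (((U h)⁻¹ : Aˣ) : A) * (U h : A) := by
          rw [hconj]
      _ = (U h : A) * a := Units.inv_mul_cancel_right _ _
  -- extend to all of A by linearity
  intro x
  have hx : x ∈ Submodule.span F (Set.range fun g => (U g : A)) := by
    rw [hA.span]; exact Submodule.mem_top
  refine Submodule.span_induction (p := fun x _ => a * x = x * a) ?_ ?_ ?_ ?_ hx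
  · rintro _ ⟨h, rfl⟩
    exact hcomm_a h
  · simp
  · intro y z _ _ hy hz
    rw [mul_add, add_mul, hy, hz]
  · intro r y _ hy
    rw [mul_smul_comm, smul_mul_assoc, hy]
end

section
/- Let F^α G be a twisted group algebra of a finite group G, g ∈ G, and t_1,...,t_k left coset representatives of C_G(g). If the element a = Σ_i U_{t_i} U_g U_{t_i}^{-1} is central in F^α G, then U_g commutes with U_h for every h ∈ C_G(g). -/
/-!
Write `φ` for the coordinate of `U_g` with respect to the basis `(U_x)`. Each summand
`U_{tᵢ} U_g U_{tᵢ}⁻¹` is a nonzero multiple of `U_{tᵢ g tᵢ⁻¹}`, and exactly one `tᵢ` lies in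
`C_G(g)`, so `φ(a) ≠ 0`. For `h ∈ C_G(g)`, conjugation by `U_h` maps the line `F U_x` onto
`F U_{hxh⁻¹}` and fixes `g`, so `φ(U_h x U_h⁻¹) = λ φ(x)` where `U_h U_g U_h⁻¹ = λ U_g`.
Centrality of `a` gives `φ(a) = λ φ(a)`, hence `λ = 1`.
-/

namespace IsTwistedGroupAlgebra

variable {F : Type} [Field F] {G : Type} [Group G] {A : Type} [Ring A] [Algebra F A]
  {U : G → Aˣ} {α : G → G → Fˣ}

noncomputable def basis (hA : IsTwistedGroupAlgebra F G A U α) : Module.Basis G F A :=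
  Module.Basis.mk hA.indep hA.span.ge

@[simp]
lemma basis_apply (hA : IsTwistedGroupAlgebra F G A U α) (x : G) : hA.basis x = U x :=
  Module.Basis.mk_apply hA.indep hA.span.ge x

lemma coord_apply_U (hA : IsTwistedGroupAlgebra F G A U α) (x z : G) :
    hA.basis.coord z (U x) = Finsupp.single x 1 z := by
  rw [← hA.basis_apply, Module.Basis.coord_apply, Module.Basis.repr_self]

lemma exists_conj_eq_smul (hA : IsTwistedGroupAlgebra F G A U α) (x y : G) :
    ∃ c : Fˣ, ((U x * U y * (U x)⁻¹ : Aˣ) : A) = (c : F) • (U (x * y * x⁻¹) : A) := by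
  refine ⟨α x y * (α (x * y * x⁻¹) x)⁻¹, ?_⟩
  have hxy : (U (x * y) : A) = (↑(α (x * y * x⁻¹) x)⁻¹ : F) • (U (x * y * x⁻¹) * U x : A) := by
    rw [hA.mul_eq, inv_mul_cancel_right, smul_smul, ← Units.val_mul, inv_mul_cancel,
      Units.val_one, one_smul]
  rw [Units.val_mul, Units.val_mul, hA.mul_eq, hxy, smul_mul_assoc, smul_mul_assoc, smul_smul,
    Units.mul_inv_cancel_right, Units.val_mul]

lemma conj_eq_coord_smul (hA : IsTwistedGroupAlgebra F G A U α) (x y : G) :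
    ((U x * U y * (U x)⁻¹ : Aˣ) : A) =
      hA.basis.coord (x * y * x⁻¹) (U x * U y * (U x)⁻¹ : Aˣ) • (U (x * y * x⁻¹) : A) := by
  obtain ⟨c, hc⟩ := hA.exists_conj_eq_smul x y
  rw [hc, map_smul, coord_apply_U, Finsupp.single_eq_same, smul_eq_mul, mul_one]

lemma coord_conj_ne_zero_iff (hA : IsTwistedGroupAlgebra F G A U α) (x y z : G) :
    hA.basis.coord z (U x * U y * (U x)⁻¹ : Aˣ) ≠ 0 ↔ x * y * x⁻¹ = z := by
  obtain ⟨c, hc⟩ := hA.exists_conj_eq_smul x y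
  rw [hc, map_smul, coord_apply_U, smul_eq_mul, mul_ne_zero_iff, Finsupp.single_apply_ne_zero]
  simp [eq_comm]

lemma coord_conj_mul (hA : IsTwistedGroupAlgebra F G A U α) (h z : G) (x : A) :
    hA.basis.coord (h * z * h⁻¹) ((U h : A) * x * ↑(U h)⁻¹) =
      hA.basis.coord (h * z * h⁻¹) (U h * U z * (U h)⁻¹ : Aˣ) * hA.basis.coord z x := by
  set φ := hA.basis.coord (h * z * h⁻¹)
  suffices φ ∘ₗ LinearMap.mulLeft F (U h : A) ∘ₗ LinearMap.mulRight F (↑(U h)⁻¹ : A) =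
      φ (U h * U z * (U h)⁻¹ : Aˣ) • hA.basis.coord z by
    simpa [mul_assoc] using LinearMap.congr_fun this x
  refine hA.basis.ext fun w => ?_
  simp only [LinearMap.comp_apply, LinearMap.mulRight_apply, LinearMap.mulLeft_apply,
    LinearMap.smul_apply, basis_apply, coord_apply_U, smul_eq_mul, ← mul_assoc, ← Units.val_mul]
  by_cases hw : w = z
  · rw [hw, Finsupp.single_eq_same, mul_one]
  · rw [Finsupp.single_eq_of_ne (Ne.symm hw), mul_zero]
    by_contra hne
    exact hw (by simpa using (hA.coord_conj_ne_zero_iff h w _).1 hne)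

lemma coord_sum_conj_ne_zero (hA : IsTwistedGroupAlgebra F G A U α) {ι : Type} [Fintype ι]
    (g : G) (t : ι → G) (ht : ∃! i, t i * g * (t i)⁻¹ = g) :
    hA.basis.coord g (∑ i, ((U (t i) * U g * (U (t i))⁻¹ : Aˣ) : A)) ≠ 0 := by
  obtain ⟨j, hj, hunique⟩ := ht
  rw [map_sum, Finset.sum_eq_single j]
  · exact (hA.coord_conj_ne_zero_iff _ _ _).2 hj
  · intro i _ hi
    by_contra hne
    exact hi (hunique i ((hA.coord_conj_ne_zero_iff _ _ _).1 hne))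
  · simp

end IsTwistedGroupAlgebra

lemma IsLeftTransversalOfCentralizer.existsUnique_conj_eq {G : Type} [Group G] {g : G} {k : ℕ}
    {t : Fin k → G} (ht : IsLeftTransversalOfCentralizer g t) :
    ∃! i, t i * g * (t i)⁻¹ = g := by
  refine existsUnique_congr (fun i => ?_) |>.1 (ht 1)
  rw [Subgroup.mem_centralizer_singleton_iff, mul_one, mul_inv_eq_iff_eq_mul]
  exact Commute.inv_left_iff

theorem central_ray_element_commutes_general (F : Type) [Field F] (G : Type) [Group G]
    (A : Type) [Ring A] [Algebra F A] (U : G → Aˣ) (α : G → G → Fˣ)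
    (hA : IsTwistedGroupAlgebra F G A U α) (g : G) {k : ℕ} (t : Fin k → G)
    (ht : IsLeftTransversalOfCentralizer g t)
    (hcentral : ∀ x : A, (∑ i : Fin k, ((U (t i) * U g * (U (t i))⁻¹ : Aˣ) : A)) * x
      = x * (∑ i : Fin k, ((U (t i) * U g * (U (t i))⁻¹ : Aˣ) : A))) :
    ∀ h ∈ Subgroup.centralizer {g}, (U g : A) * (U h : A) = (U h : A) * (U g : A) := by
  intro h hh
  have hhg : h * g * h⁻¹ = g :=
    mul_inv_eq_iff_eq_mul.2 (Subgroup.mem_centralizer_singleton_iff.1 hh)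
  set a := ∑ i : Fin k, ((U (t i) * U g * (U (t i))⁻¹ : Aˣ) : A)
  have ha : (U h : A) * a * ↑(U h)⁻¹ = a := by rw [← hcentral, Units.mul_inv_cancel_right]
  have hcoord : hA.basis.coord g (U h * U g * (U h)⁻¹ : Aˣ) = 1 := by
    have hφ := hA.coord_conj_mul h g a
    rw [hhg, ha] at hφ
    exact mul_right_cancel₀ (hA.coord_sum_conj_ne_zero g t ht.existsUnique_conj_eq)
      (by rw [one_mul, ← hφ])
  have hconj : ((U h * U g * (U h)⁻¹ : Aˣ) : A) = U g := by
    rw [hA.conj_eq_coord_smul, hhg, hcoord, one_smul]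
  rw [Units.val_mul, Units.val_mul, Units.mul_inv_eq_iff_eq_mul] at hconj
  exact hconj.symm

/-- if `a = Σᵢ U_{tᵢ} U_g U_{tᵢ}⁻¹` is central in `F^α G`, then `U_g`
commutes with `U_h` for every `h ∈ C_G(g)`. -/
theorem central_ray_element_commutes (F : Type) [Field F] (G : Type) [Group G] [Fintype G]
    (A : Type) [Ring A] [Algebra F A] (U : G → Aˣ) (α : G → G → Fˣ)
    (hA : IsTwistedGroupAlgebra F G A U α) (g : G) {k : ℕ} (t : Fin k → G)
    (ht : IsLeftTransversalOfCentralizer g t)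
    (hcentral : ∀ x : A, (∑ i : Fin k, ((U (t i) * U g * (U (t i))⁻¹ : Aˣ) : A)) * x
      = x * (∑ i : Fin k, ((U (t i) * U g * (U (t i))⁻¹ : Aˣ) : A))) :
    ∀ h ∈ Subgroup.centralizer {g}, (U g : A) * (U h : A) = (U h : A) * (U g : A) :=
  central_ray_element_commutes_general F G A U α hA g t ht hcentral
end

section
/- Let F^α G be a twisted group algebra of a finite group G, g ∈ G, and t_1,...,t_k left coset representatives of C_G(g) in G. Suppose λ_1,...,λ_k ∈ F, not all zero, are such that b = Σ_i λ_i U_{t_i} U_g U_{t_i}^{-1} is central in F^α G. Then all λ_i are equal. -/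
section Aux

variable {F : Type} [Field F] {G : Type} [Group G]
    {A : Type} [Ring A] [Algebra F A] {U : G → Aˣ} {α : G → G → Fˣ}

/-- `U_s U_g U_s⁻¹` is an explicit nonzero scalar multiple of `U_{sgs⁻¹}`. -/
lemma tga_conj_scalar (hA : IsTwistedGroupAlgebra F G A U α) (g s : G) :
    ((U s * U g * (U s)⁻¹ : Aˣ) : A)
      = ((α s g : F) * ((α (s * g * s⁻¹) s : F))⁻¹) • (U (s * g * s⁻¹) : A) := by
  apply (U s).isUnit.mul_right_cancel
  rw [← Units.val_mul, show (U s * U g * (U s)⁻¹ * U s : Aˣ) = U s * U g by group,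
    Units.val_mul, hA.mul_eq, smul_mul_assoc, hA.mul_eq,
    show s * g * s⁻¹ * s = s * g by group, smul_smul]
  congr 1
  field_simp

/-- Conjugation of `U_s U_g U_s⁻¹` by `U_h` gives exactly `U_{hs} U_g U_{hs}⁻¹`:
the cocycle factors cancel. -/
lemma tga_conj_conj (hA : IsTwistedGroupAlgebra F G A U α) (g h s : G) :
    ((U h * (U s * U g * (U s)⁻¹) * (U h)⁻¹ : Aˣ) : A)
      = ((U (h * s) * U g * (U (h * s))⁻¹ : Aˣ) : A) := by
  apply (U (h * s)).isUnit.mul_right_cancel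
  have h2 : ((U (h * s) * U g * (U (h * s))⁻¹ : Aˣ) : A) * (U (h * s) : A)
      = (U (h * s) : A) * (U g : A) := by
    rw [← Units.val_mul, show (U (h*s) * U g * (U (h*s))⁻¹ * U (h*s) : Aˣ) = U (h*s) * U g
      by group, Units.val_mul]
  have hinv : (((U h)⁻¹ : Aˣ) : A) * (U (h * s) : A) = ((α h s : F))⁻¹ • (U s : A) := by
    have hm : (U (h * s) : A) = ((α h s : F))⁻¹ • ((U h : A) * (U s : A)) := by
      rw [hA.mul_eq, smul_smul, inv_mul_cancel₀ (α h s).ne_zero, one_smul]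
    rw [hm, mul_smul_comm, ← mul_assoc, Units.inv_mul, one_mul]
  rw [h2, Units.val_mul, Units.val_mul, mul_assoc _ (((U h)⁻¹ : Aˣ) : A), hinv,
    mul_smul_comm, mul_assoc ((U h : A)), ← Units.val_mul,
    show (U s * U g * (U s)⁻¹ * U s : Aˣ) = U s * U g by group,
    Units.val_mul, ← mul_assoc, hA.mul_eq h s, smul_mul_assoc, smul_smul,
    inv_mul_cancel₀ (α h s).ne_zero, one_smul]

end Aux

/-- if `b = Σᵢ λᵢ U_{tᵢ} U_g U_{tᵢ}⁻¹` is central in `F^α G` with the `λᵢ`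
not all zero, then all the `λᵢ` are equal. -/
theorem central_combination_constant_coeffs (F : Type) [Field F] (G : Type) [Group G]
    [Fintype G] (A : Type) [Ring A] [Algebra F A] (U : G → Aˣ) (α : G → G → Fˣ)
    (hA : IsTwistedGroupAlgebra F G A U α) (g : G) {k : ℕ} (t : Fin k → G)
    (ht : IsLeftTransversalOfCentralizer g t) (lam : Fin k → F)
    (hne : ∃ i, lam i ≠ 0)
    (hcentral : ∀ x : A,
      (∑ i : Fin k, lam i • ((U (t i) * U g * (U (t i))⁻¹ : Aˣ) : A)) * x
        = x * (∑ i : Fin k, lam i • ((U (t i) * U g * (U (t i))⁻¹ : Aˣ) : A))) :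
    ∀ i j : Fin k, lam i = lam j := by
  intro i j
  classical
  -- the scalar appearing in `tga_conj_scalar`
  set κ : G → F := fun s => (α s g : F) * ((α (s * g * s⁻¹) s : F))⁻¹ with hκ
  have hκne : ∀ s : G, κ s ≠ 0 := fun s =>
    mul_ne_zero (α s g).ne_zero (inv_ne_zero (α (s * g * s⁻¹) s).ne_zero)
  set h : G := t j * (t i)⁻¹ with hh
  -- generic commuting lemma
  have commaux : ∀ u v : G, u * g * u⁻¹ = v * g * v⁻¹ → (v⁻¹ * u) * g = g * (v⁻¹ * u) := by
    intro u v huv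
    calc (v⁻¹ * u) * g = v⁻¹ * (u * g * u⁻¹) * u := by group
      _ = v⁻¹ * (v * g * v⁻¹) * u := by rw [huv]
      _ = g * (v⁻¹ * u) := by group
  -- uniqueness of coset representatives
  have utm : ∀ m n : Fin k, (t n)⁻¹ * t m ∈ Subgroup.centralizer {g} → m = n := by
    intro m n hn
    obtain ⟨c, hc, huc⟩ := ht (t m)
    have h1 : m = c := huc m (show (t m)⁻¹ * t m ∈ _ by
      rw [inv_mul_cancel]; exact Subgroup.one_mem _)
    have h2 : n = c := huc n hn
    rw [h1, h2]
  have claim1 : ∀ m : Fin k, t m * g * (t m)⁻¹ = t j * g * (t j)⁻¹ ↔ m = j := by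
    intro m
    constructor
    · intro he
      exact utm m j (Subgroup.mem_centralizer_singleton_iff.mpr (commaux (t m) (t j) he))
    · intro he; rw [he]
  have claim2 : ∀ m : Fin k, (h * t m) * g * (h * t m)⁻¹ = t j * g * (t j)⁻¹ ↔ m = i := by
    intro m
    constructor
    · intro he
      have hz : (t j)⁻¹ * (h * t m) = (t i)⁻¹ * t m := by rw [hh]; group
      have := commaux (h * t m) (t j) he
      rw [hz] at this
      exact utm m i (Subgroup.mem_centralizer_singleton_iff.mpr this)
    · intro he
      have hti : h * t i = t j := by rw [hh]; group
      rw [he, hti]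
  -- centrality gives conjugation invariance
  have hb := hcentral ((U h : A))
  have hconj : (U h : A) * (∑ m : Fin k, lam m • ((U (t m) * U g * (U (t m))⁻¹ : Aˣ) : A))
      * (((U h)⁻¹ : Aˣ) : A)
      = ∑ m : Fin k, lam m • ((U (t m) * U g * (U (t m))⁻¹ : Aˣ) : A) := by
    rw [← hb, mul_assoc, Units.mul_inv, mul_one]
  -- rewrite the left-hand side of hconj
  have lhs_eq : (U h : A) * (∑ m : Fin k, lam m • ((U (t m) * U g * (U (t m))⁻¹ : Aˣ) : A))
      * (((U h)⁻¹ : Aˣ) : A)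
      = ∑ m : Fin k, (lam m * κ (h * t m)) • (U ((h * t m) * g * (h * t m)⁻¹) : A) := by
    rw [Finset.mul_sum, Finset.sum_mul]
    refine Finset.sum_congr rfl fun m _ => ?_
    rw [mul_smul_comm, smul_mul_assoc, ← Units.val_mul, ← Units.val_mul,
      tga_conj_conj hA, tga_conj_scalar hA, smul_smul]
  have rhs_eq : ∑ m : Fin k, lam m • ((U (t m) * U g * (U (t m))⁻¹ : Aˣ) : A)
      = ∑ m : Fin k, (lam m * κ (t m)) • (U (t m * g * (t m)⁻¹) : A) := by
    refine Finset.sum_congr rfl fun m _ => ?_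
    rw [tga_conj_scalar hA, smul_smul]
  have E : ∑ m : Fin k, (lam m * κ (h * t m)) • (U ((h * t m) * g * (h * t m)⁻¹) : A)
      = ∑ m : Fin k, (lam m * κ (t m)) • (U (t m * g * (t m)⁻¹) : A) := by
    rw [← lhs_eq, hconj, rhs_eq]
  -- package as a Finsupp and use linear independence
  set l : G →₀ F := ∑ m : Fin k,
      (Finsupp.single ((h * t m) * g * (h * t m)⁻¹) (lam m * κ (h * t m))
        - Finsupp.single (t m * g * (t m)⁻¹) (lam m * κ (t m))) with hl
  have hl0 : Finsupp.linearCombination F (fun g => (U g : A)) l = 0 := by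
    rw [hl, map_sum]
    simp only [map_sub, Finsupp.linearCombination_single]
    rw [Finset.sum_sub_distrib, E, sub_self]
  have lz : l = 0 := linearIndependent_iff.mp hA.indep l hl0
  have hval : l (t j * g * (t j)⁻¹) = 0 := by rw [lz]; rfl
  rw [hl, Finsupp.finset_sum_apply] at hval
  simp only [Finsupp.sub_apply, Finsupp.single_apply] at hval
  simp only [claim1, claim2] at hval
  rw [Finset.sum_sub_distrib, Finset.sum_ite_eq', Finset.sum_ite_eq'] at hval
  simp only [Finset.mem_univ, if_true] at hval
  have hti : h * t i = t j := by rw [hh]; group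
  rw [hti, sub_eq_zero] at hval
  exact mul_right_cancel₀ (hκne (t j)) hval
end

section
/- Let G be a finite group with a subgroup H of index 2, and F^α G a twisted group algebra over an algebraically closed field of characteristic zero such that for every e ≠ h ∈ H there is g ∈ C_G(h) with U_h U_g ≠ U_g U_h. Then F^α G, with the Z/2Z-grading whose even part is spanned by {U_h : h ∈ H} and odd part by {U_g : g ∉ H}, is Z/2Z-graded-simple (has no nonzero proper graded two-sided ideals). -/
section ConjSum

variable (F : Type) {G A : Type} [CommSemiring F] [Fintype G] [Semiring A] [Algebra F A]

def conjSum (U : G → Aˣ) : A →ₗ[F] A :=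
  ∑ g, LinearMap.mulLeft F (U g : A) ∘ₗ LinearMap.mulRight F (↑(U g)⁻¹ : A)

variable {F}

theorem conjSum_apply (U : G → Aˣ) (a : A) :
    conjSum F U a = ∑ g, (U g : A) * a * ↑(U g)⁻¹ := by
  simp [conjSum, LinearMap.sum_apply, mul_assoc]

theorem conjSum_one (U : G → Aˣ) : conjSum F U 1 = Fintype.card G := by
  simp [conjSum_apply]

end ConjSum

theorem conjSum_mem {F G A : Type} [CommSemiring F] [Fintype G] [Ring A] [Algebra F A]
    (U : G → Aˣ) {I : TwoSidedIdeal A} {a : A} (ha : a ∈ I) : conjSum F U a ∈ I := by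
  rw [conjSum_apply]
  exact I.finsetSum_mem _ _ fun g _ => I.mul_mem_right _ _ (I.mul_mem_left _ _ ha)

namespace IsTwistedGroupAlgebra

variable {F G A : Type} [Field F] [Group G] [Ring A] [Algebra F A] {U : G → Aˣ}
  {α : G → G → Fˣ}

theorem mul_inv_eq_smul (hA : IsTwistedGroupAlgebra F G A U α) (g x : G) :
    (U g : A) * ↑(U x)⁻¹ = (α (g * x⁻¹) x : F)⁻¹ • (U (g * x⁻¹) : A) := by
  have h := hA.mul_eq (g * x⁻¹) x
  rw [inv_mul_cancel_right] at h
  rw [eq_inv_smul_iff₀ (Units.ne_zero _), ← smul_mul_assoc, ← h, Units.mul_inv_cancel_right]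

theorem inv_mul_eq_smul (hA : IsTwistedGroupAlgebra F G A U α) (g c : G) :
    (↑(U (g * c))⁻¹ : A) = (α g c : F) • ((↑(U c)⁻¹ : A) * ↑(U g)⁻¹) := by
  refine Units.inv_eq_of_mul_eq_one_right ?_
  rw [mul_smul_comm, ← smul_mul_assoc, ← hA.mul_eq, mul_assoc, Units.mul_inv_cancel_left,
    Units.mul_inv]

theorem conj_mul (hA : IsTwistedGroupAlgebra F G A U α) (g c : G) (a : A) :
    (U (g * c) : A) * a * ↑(U (g * c))⁻¹ =
      (U g : A) * ((U c : A) * a * ↑(U c)⁻¹) * ↑(U g)⁻¹ := by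
  have hU : (U (g * c) : A) = (α g c : F)⁻¹ • ((U g : A) * U c) := by
    rw [hA.mul_eq, inv_smul_smul₀ (Units.ne_zero _)]
  rw [hU, hA.inv_mul_eq_smul]
  simp only [smul_mul_assoc, mul_smul_comm, smul_smul, mul_inv_cancel₀ (Units.ne_zero _),
    one_smul, mul_assoc]

theorem conjSum_conj [Fintype G] (hA : IsTwistedGroupAlgebra F G A U α) (c : G) (a : A) :
    conjSum F U ((U c : A) * a * ↑(U c)⁻¹) = conjSum F U a := by
  simp only [conjSum_apply, ← hA.conj_mul]
  exact Fintype.sum_equiv (Equiv.mulRight c) _ _ fun _ => rfl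

theorem mul_eq_smul_mul_of_commute (hA : IsTwistedGroupAlgebra F G A U α) {c k : G}
    (h : Commute c k) :
    (U c : A) * U k = ((α c k : F) * (α k c : F)⁻¹) • ((U k : A) * U c) := by
  rw [hA.mul_eq, hA.mul_eq, h.eq, smul_smul, inv_mul_cancel_right₀ (Units.ne_zero _)]

theorem conjSum_eq_zero_of_not_commute [Fintype G] (hA : IsTwistedGroupAlgebra F G A U α)
    {k c : G} (hc : c ∈ Subgroup.centralizer {k}) (hne : (U k : A) * U c ≠ (U c : A) * U k) :
    conjSum F U (U k : A) = 0 := by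
  set χ : F := (α c k : F) * (α k c : F)⁻¹
  have hcomm : (U c : A) * U k = χ • ((U k : A) * U c) :=
    hA.mul_eq_smul_mul_of_commute (Subgroup.mem_centralizer_singleton_iff.1 hc)
  have hχ : χ ≠ 1 := fun h => hne (by rw [hcomm, h, one_smul])
  have hconj : (U c : A) * U k * ↑(U c)⁻¹ = χ • (U k : A) := by
    rw [hcomm, smul_mul_assoc, Units.mul_inv_cancel_right]
  have hfix := hA.conjSum_conj c (U k : A)
  rw [hconj, map_smul] at hfix
  have h : (χ - 1) • conjSum F U (U k : A) = 0 := by rw [sub_smul, one_smul, hfix, sub_self]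
  exact (smul_eq_zero.1 h).resolve_left (sub_ne_zero.2 hχ)

theorem eq_top_of_mem_span_coset [CharZero F] [Fintype G] (hA : IsTwistedGroupAlgebra F G A U α)
    {H : Subgroup G} (hH : ∀ k ∈ H, k ≠ 1 → conjSum F U (U k : A) = 0) {S : Set G}
    (hS : ∀ x ∈ S, ∀ y ∈ S, x * y⁻¹ ∈ H) {I : TwoSidedIdeal A} {b : A} (hbI : b ∈ I)
    (hb : b ≠ 0) (hbS : b ∈ Submodule.span F ((fun g => (U g : A)) '' S)) : I = ⊤ := by
  obtain ⟨l, hl, rfl⟩ := (Finsupp.mem_span_image_iff_linearCombination F).1 hbS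
  obtain ⟨x, hx⟩ : l.support.Nonempty :=
    Finsupp.support_nonempty_iff.2 fun h => hb (by rw [h, map_zero])
  have hsum : conjSum F U (Finsupp.linearCombination F (fun g => (U g : A)) l * ↑(U x)⁻¹) =
      algebraMap F A (l x * Fintype.card G) := by
    rw [Finsupp.linearCombination_apply, Finsupp.sum, Finset.sum_mul, map_sum,
      Finset.sum_eq_single_of_mem x hx]
    · rw [smul_mul_assoc, map_smul, Units.mul_inv, conjSum_one, map_mul, map_natCast,
        Algebra.smul_def]
    · intro g hg hgx
      rw [smul_mul_assoc, hA.mul_inv_eq_smul, map_smul, map_smul,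
        hH _ (hS g (hl hg) x (hl hx)) (mul_inv_eq_one.not.2 hgx), smul_zero, smul_zero]
  have hmem : algebraMap F A (l x * Fintype.card G) ∈ I :=
    hsum ▸ conjSum_mem U (I.mul_mem_right _ _ hbI)
  have hne : l x * Fintype.card G ≠ 0 :=
    mul_ne_zero (Finsupp.mem_support_iff.1 hx) (Nat.cast_ne_zero.2 Fintype.card_ne_zero)
  have hone := I.mul_mem_left (algebraMap F A (l x * Fintype.card G)⁻¹) _ hmem
  rwa [← map_mul, inv_mul_cancel₀ hne, map_one, I.one_mem_iff] at hone

end IsTwistedGroupAlgebra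

theorem twisted_group_algebra_graded_simple_general (F : Type) [Field F]
    [CharZero F] (G : Type) [Group G] [Fintype G]
    (A : Type) [Ring A] [Algebra F A] (U : G → Aˣ) (α : G → G → Fˣ)
    (hA : IsTwistedGroupAlgebra F G A U α)
    (H : Subgroup G) (hH : H.index = 2)
    (hnd : ∀ h : G, h ∈ H → h ≠ 1 → ∃ g ∈ Subgroup.centralizer {h},
      (U h : A) * (U g : A) ≠ (U g : A) * (U h : A)) :
    ∀ I : TwoSidedIdeal A,
      (∀ a ∈ I, ∃ a₀ a₁ : A,
        a₀ ∈ Submodule.span F ((fun g => (U g : A)) '' (H : Set G)) ∧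
        a₁ ∈ Submodule.span F ((fun g => (U g : A)) '' ((H : Set G)ᶜ)) ∧
        a₀ ∈ I ∧ a₁ ∈ I ∧ a = a₀ + a₁) →
      I = ⊥ ∨ I = ⊤ := by
  intro I hgr
  refine or_iff_not_imp_left.2 fun hbot => ?_
  obtain ⟨a, haI, ha⟩ : ∃ a ∈ I, a ≠ 0 := by
    by_contra! h
    exact hbot (eq_bot_iff.2 fun x hx => (TwoSidedIdeal.mem_bot A).2 (h x hx))
  obtain ⟨a₀, a₁, h₀, h₁, ha₀, ha₁, rfl⟩ := hgr a haI
  have hT : ∀ k ∈ H, k ≠ 1 → conjSum F U (U k : A) = 0 := fun k hk hk1 => by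
    obtain ⟨c, hc, hne⟩ := hnd k hk hk1
    exact hA.conjSum_eq_zero_of_not_commute hc hne
  by_cases h0 : a₀ = 0
  · have hS : ∀ x ∈ (H : Set G)ᶜ, ∀ y ∈ (H : Set G)ᶜ, x * y⁻¹ ∈ H := fun x hx y hy =>
      (Subgroup.mul_mem_iff_of_index_two hH).2 (iff_of_false hx (H.inv_mem_iff.not.2 hy))
    exact hA.eq_top_of_mem_span_coset hT hS ha₁ (by rintro rfl; simp [h0] at ha) h₁
  · exact hA.eq_top_of_mem_span_coset hT (fun x hx y hy => H.mul_mem hx (H.inv_mem hy)) ha₀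
      h0 h₀

/-- let `H ≤ G` of index 2 and `F^α G` a twisted group algebra over an
algebraically closed field of characteristic zero such that for every `e ≠ h ∈ H` there
is `g ∈ C_G(h)` with `U_h U_g ≠ U_g U_h`.  Then `F^α G`, with the `ℤ/2ℤ`-grading whose
even part is spanned by `{U_h : h ∈ H}` and odd part by `{U_g : g ∉ H}`, has no nonzero
proper graded two-sided ideal. -/
theorem twisted_group_algebra_graded_simple (F : Type) [Field F] [IsAlgClosed F]
    [CharZero F] (G : Type) [Group G] [Fintype G]
    (A : Type) [Ring A] [Algebra F A] (U : G → Aˣ) (α : G → G → Fˣ)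
    (hA : IsTwistedGroupAlgebra F G A U α)
    (H : Subgroup G) (hH : H.index = 2)
    (hnd : ∀ h : G, h ∈ H → h ≠ 1 → ∃ g ∈ Subgroup.centralizer {h},
      (U h : A) * (U g : A) ≠ (U g : A) * (U h : A)) :
    ∀ I : TwoSidedIdeal A,
      (∀ a ∈ I, ∃ a₀ a₁ : A,
        a₀ ∈ Submodule.span F ((fun g => (U g : A)) '' (H : Set G)) ∧
        a₁ ∈ Submodule.span F ((fun g => (U g : A)) '' ((H : Set G)ᶜ)) ∧
        a₀ ∈ I ∧ a₁ ∈ I ∧ a = a₀ + a₁) →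
      I = ⊥ ∨ I = ⊤ :=
  twisted_group_algebra_graded_simple_general F G A U α hA H hH hnd
end

section
/- Let G be a finite abelian group and θ: G × G → F^× a nondegenerate skew-symmetric bicharacter over an algebraically closed field F of characteristic zero, such that θ(g,g) = 1 for all g. Then |G| is a perfect square. -/
/-- A skew-symmetric bicharacter on an abelian group `G` with values in `Fˣ`:
multiplicative in each variable and satisfying `θ(g,h)·θ(h,g) = 1`. -/
structure IsSkewSymmetricBicharacter (F : Type) [Field F] (G : Type) [CommGroup G]
    (θ : G → G → Fˣ) : Prop where
  mul_left : ∀ (g h₁ h₂ : G), θ (h₁ * h₂) g = θ h₁ g * θ h₂ g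
  mul_right : ∀ (g h₁ h₂ : G), θ g (h₁ * h₂) = θ g h₁ * θ g h₂
  skew : ∀ g h : G, θ g h * θ h g = 1

/-- A bicharacter is nondegenerate if every `g ≠ e` pairs nontrivially with some `h`. -/
def BicharNondegenerate {F : Type} [Field F] {G : Type} [CommGroup G]
    (θ : G → G → Fˣ) : Prop :=
  ∀ g : G, g ≠ 1 → ∃ h : G, θ g h ≠ 1

section Aux

variable {F : Type} [Field F] {G : Type} [CommGroup G]

/-- The homomorphism `x ↦ θ g x`. -/
def Bichar.rightHom {θ : G → G → Fˣ} (hθ : IsSkewSymmetricBicharacter F G θ) (g : G) :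
    G →* Fˣ where
  toFun := θ g
  map_one' := by
    have h := hθ.mul_right g 1 1
    rw [one_mul] at h
    exact (left_eq_mul.mp h)
  map_mul' := hθ.mul_right g

/-- The homomorphism `x ↦ θ x g`. -/
def Bichar.leftHom {θ : G → G → Fˣ} (hθ : IsSkewSymmetricBicharacter F G θ) (g : G) :
    G →* Fˣ where
  toFun := fun x => θ x g
  map_one' := by
    have h := hθ.mul_left g 1 1
    rw [one_mul] at h
    exact (left_eq_mul.mp h)
  map_mul' := fun a b => hθ.mul_left g a b

theorem bichar_aux (F : Type) [Field F] (N : ℕ) :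
    ∀ (G : Type) [CommGroup G] [Finite G] (θ : G → G → Fˣ),
      IsSkewSymmetricBicharacter F G θ → BicharNondegenerate θ →
      (∀ g : G, θ g g = 1) → Nat.card G = N → ∃ m : ℕ, N = m * m := by
  induction N using Nat.strong_induction_on with
  | _ N ih =>
    intro G _ _ θ hθ hnd hdiag hcard
    by_cases htriv : ∀ x : G, x = 1
    · have : Subsingleton G := ⟨fun a b => (htriv a).trans (htriv b).symm⟩
      refine ⟨1, ?_⟩
      rw [← hcard, Nat.card_eq_one_iff_unique]
      exact ⟨this, ⟨1⟩⟩
    · push_neg at htriv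
      obtain ⟨x₀, hx₀⟩ := htriv
      have : Nontrivial G := nontrivial_of_ne x₀ 1 hx₀
      set n := Monoid.exponent G with hn
      have hn1 : 1 < n := Monoid.one_lt_exponent
      have hnpos : 0 < n := by omega
      obtain ⟨g, hg⟩ := Monoid.exists_orderOf_eq_exponent (G := G) Monoid.ExponentExists.of_finite
      -- θ g x has n-th power 1 for every x (and same for any fixed first argument)
      have hpow : ∀ a x : G, (θ a x) ^ n = 1 := by
        intro a x
        have := map_pow (Bichar.rightHom hθ a) x n
        simp only [Bichar.rightHom, MonoidHom.coe_mk, OneHom.coe_mk] at this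
        rw [← this, Monoid.pow_exponent_eq_one x]
        have := (Bichar.rightHom hθ a).map_one
        simpa [Bichar.rightHom] using this
      -- find h with orderOf (θ g h) = n
      have key : ∃ h : G, orderOf (θ g h) = n := by
        set H := (Bichar.rightHom hθ g).range with hH
        have hdn : Monoid.exponent ↥H ∣ n := by
          apply Monoid.exponent_dvd_of_forall_pow_eq_one
          rintro ⟨y, t, rfl⟩
          rw [Subtype.ext_iff, SubmonoidClass.coe_pow, OneMemClass.coe_one]
          exact hpow g t
        haveI : Finite ↥H := Finite.of_surjective
          (fun t : G => (⟨Bichar.rightHom hθ g t, ⟨t, rfl⟩⟩ : ↥H))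
          (by rintro ⟨y, t, rfl⟩; exact ⟨t, rfl⟩)
        have hnd' : n ∣ Monoid.exponent ↥H := by
          rw [hn, ← hg]
          apply orderOf_dvd_of_pow_eq_one
          by_contra hne
          obtain ⟨t, ht⟩ := hnd _ hne
          apply ht
          have h1 : θ (g ^ Monoid.exponent ↥H) t = (θ g t) ^ Monoid.exponent ↥H := by
            have := map_pow (Bichar.leftHom hθ t) g (Monoid.exponent ↥H)
            simpa [Bichar.leftHom] using this
          have h2 : (⟨θ g t, ⟨t, rfl⟩⟩ : ↥H) ^ Monoid.exponent ↥H = 1 :=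
            Monoid.pow_exponent_eq_one _
          rw [h1]
          have h3 := congrArg Subtype.val h2
          rw [SubmonoidClass.coe_pow, OneMemClass.coe_one] at h3
          exact h3
        have hd : Monoid.exponent ↥H = n := Nat.dvd_antisymm hdn hnd'
        obtain ⟨y, hy⟩ := Monoid.exists_orderOf_eq_exponent (G := ↥H)
          Monoid.ExponentExists.of_finite
        obtain ⟨t, ht⟩ := y.2
        refine ⟨t, ?_⟩
        have : (Bichar.rightHom hθ g) t = θ g t := rfl
        rw [← this, ht]
        rw [show ((y : Fˣ)) = H.subtype y from rfl]
        rw [orderOf_injective H.subtype H.subtype_injective y, hy, hd]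
      obtain ⟨h, hζord⟩ := key
      set ζ := θ g h with hζ
      -- all n-th roots of unity lie in zpowers ζ
      have hroot : ∀ y : Fˣ, y ^ n = 1 → y ∈ Subgroup.zpowers ζ := by
        intro y hy
        have hprim : IsPrimitiveRoot (ζ : F) n := by
          rw [IsPrimitiveRoot.coe_units_iff, ← hζord]
          exact IsPrimitiveRoot.orderOf ζ
        haveI : NeZero n := ⟨hnpos.ne'⟩
        have hyF : (y : F) ^ n = 1 := by
          rw [← Units.val_pow_eq_pow_val, hy, Units.val_one]
        obtain ⟨i, _, hi⟩ := hprim.eq_pow_of_pow_eq_one hyF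
        refine ⟨(i : ℤ), ?_⟩
        show ζ ^ (i : ℤ) = y
        rw [zpow_natCast]
        exact Units.ext (by push_cast; exact hi)
      -- the pairing homomorphism
      set Φ := (Bichar.rightHom hθ g).prod (Bichar.rightHom hθ h) with hΦ
      have hΦdef : ∀ x : G, Φ x = (θ g x, θ h x) := fun x => rfl
      -- skew consequences
      have hskew : ∀ a b : G, θ a b = (θ b a)⁻¹ := by
        intro a b
        exact eq_inv_of_mul_eq_one_right (hθ.skew b a)
      have hθhg : θ h g = ζ⁻¹ := by rw [hskew h g, hζ]
      -- compute zpow in second argument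
      have hzpow : ∀ a x : G, ∀ k : ℤ, θ a (x ^ k) = (θ a x) ^ k := by
        intro a x k
        have := map_zpow (Bichar.rightHom hθ a) x k
        simpa [Bichar.rightHom] using this
      have hmul : ∀ a x y : G, θ a (x * y) = θ a x * θ a y := fun a => hθ.mul_right a
      -- range of Φ
      have hrange : Φ.range = (Subgroup.zpowers ζ).prod (Subgroup.zpowers ζ) := by
        apply le_antisymm
        · rintro _ ⟨x, rfl⟩
          rw [hΦdef]
          exact Subgroup.mem_prod.mpr ⟨hroot _ (hpow g x), hroot _ (hpow h x)⟩
        · rintro ⟨y₁, y₂⟩ hy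
          rw [Subgroup.mem_prod] at hy
          obtain ⟨⟨i, hi⟩, ⟨j, hj⟩⟩ := hy
          have hi' : ζ ^ i = y₁ := hi
          have hj' : ζ ^ j = y₂ := hj
          refine ⟨g ^ (-j) * h ^ i, ?_⟩
          rw [hΦdef]
          have e1 : θ g (g ^ (-j) * h ^ i) = y₁ := by
            rw [hmul, hzpow, hzpow, hdiag g, one_zpow, one_mul, ← hζ, hi']
          have e2 : θ h (g ^ (-j) * h ^ i) = y₂ := by
            rw [hmul, hzpow, hzpow, hdiag h, one_zpow, mul_one, hθhg, inv_zpow, zpow_neg,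
              inv_inv, hj']
          rw [e1, e2]
      -- cardinality
      have hcardrange : Nat.card Φ.range = n * n := by
        rw [hrange, Nat.card_congr (Subgroup.prodEquiv _ _).toEquiv, Nat.card_prod,
          Nat.card_zpowers, hζord]
      have hcardG : Nat.card G = (n * n) * Nat.card Φ.ker := by
        rw [Subgroup.card_eq_card_quotient_mul_card_subgroup Φ.ker,
          Nat.card_congr (QuotientGroup.quotientKerEquivRange Φ).toEquiv, hcardrange]
      -- kernel membership
      have hker : ∀ x : G, x ∈ Φ.ker ↔ θ g x = 1 ∧ θ h x = 1 := by
        intro x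
        rw [MonoidHom.mem_ker, hΦdef, Prod.ext_iff]
        rfl
      -- restricted bicharacter on the kernel
      set K := Φ.ker with hK
      set θ' : ↥K → ↥K → Fˣ := fun a b => θ a b with hθ'def
      have hθ' : IsSkewSymmetricBicharacter F ↥K θ' := by
        constructor
        · intro a b c; simpa [hθ'def] using hθ.mul_left (a : G) b c
        · intro a b c; simpa [hθ'def] using hθ.mul_right (a : G) b c
        · intro a b; exact hθ.skew a b
      have hdiag' : ∀ w : ↥K, θ' w w = 1 := fun w => hdiag w
      have hnd' : BicharNondegenerate θ' := by
        intro w hw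
        have hw1 : (w : G) ≠ 1 := fun e => hw (Subtype.ext e)
        obtain ⟨x, hx⟩ := hnd w hw1
        -- decompose x = v * g^(-a) * h^b with v ∈ K
        obtain ⟨b, hb⟩ := hroot (θ g x) (hpow g x)
        have hb' : ζ ^ b = θ g x := hb
        set x' := x * h ^ (-b) with hx'
        have hgx' : θ g x' = 1 := by
          rw [hx', hmul, hzpow, ← hζ, ← hb', ← zpow_add, add_neg_cancel, zpow_zero]
        obtain ⟨a, ha⟩ := hroot (θ h x') (hpow h x')
        have ha' : ζ ^ a = θ h x' := ha
        set v := x' * g ^ a with hv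
        have hgv : θ g v = 1 := by
          rw [hv, hmul, hgx', hzpow, hdiag g, one_zpow, one_mul]
        have hhv : θ h v = 1 := by
          rw [hv, hmul, hzpow, hθhg, ← ha', inv_zpow, ← zpow_neg, ← zpow_add, add_neg_cancel,
            zpow_zero]
        have hvK : v ∈ K := (hker v).mpr ⟨hgv, hhv⟩
        -- θ w respects the decomposition
        have hwg : θ (w : G) g = 1 := by
          rw [hskew, ((hker w).mp w.2).1, inv_one]
        have hwh : θ (w : G) h = 1 := by
          rw [hskew, ((hker w).mp w.2).2, inv_one]
        have hxv : θ (w : G) x = θ (w : G) v := by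
          have hxeq : x = v * g ^ (-a) * h ^ b := by
            rw [hv, hx']
            group
          rw [hxeq, hmul, hmul, hzpow, hzpow, hwg, hwh, one_zpow, one_zpow, mul_one, mul_one]
        refine ⟨⟨v, hvK⟩, ?_⟩
        simpa [hθ'def, ← hxv] using hx
      -- induction
      have hKpos : 0 < Nat.card K := Nat.card_pos
      have hKlt : Nat.card ↥K < N := by
        rw [← hcard, hcardG]
        have h1 : Nat.card ↥K < 2 * 2 * Nat.card ↥K := by omega
        have h2 : 2 * 2 * Nat.card ↥K ≤ n * n * Nat.card ↥K :=
          Nat.mul_le_mul_right _ (Nat.mul_le_mul hn1 hn1)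
        exact lt_of_lt_of_le h1 h2
      obtain ⟨m, hm⟩ := ih (Nat.card ↥K) hKlt ↥K θ' hθ' hnd' hdiag' rfl
      refine ⟨n * m, ?_⟩
      rw [← hcard, hcardG, hm]
      ring

end Aux

/-- a finite abelian group carrying a nondegenerate skew-symmetric
bicharacter with `θ(g,g) = 1` for all `g` (over an algebraically closed field of
characteristic zero) has square order. -/
theorem card_square_of_nondegenerate_bicharacter (F : Type) [Field F] [IsAlgClosed F]
    [CharZero F] (G : Type) [CommGroup G] [Fintype G] (θ : G → G → Fˣ)
    (hθ : IsSkewSymmetricBicharacter F G θ) (hnd : BicharNondegenerate θ)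
    (hdiag : ∀ g : G, θ g g = 1) :
    ∃ m : ℕ, Fintype.card G = m * m := by
  rw [← Nat.card_eq_fintype_card]
  exact bichar_aux F (Nat.card G) G θ hθ hnd hdiag rfl
end

section
/- Let G be a finite abelian group carrying a nondegenerate skew-symmetric bicharacter θ with values in an algebraically closed field F of characteristic zero. Let H = {g ∈ G : θ(g,g) = 1}. Then either H = G, in which case |G| is a perfect square, or [G : H] = 2. -/
/-!
The diagonal `g ↦ θ(g,g)` is a character whose values square to `1`, so its kernel has index at
most `2`. If it is trivial, `θ` is alternating, and a maximal isotropic subgroup `A` equals its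
orthogonal `A^⊥`. Pairing gives injections `G ⧸ A^⊥ ↪ Hom(A, Fˣ)` and, by nondegeneracy,
`A ↪ Hom(G ⧸ A^⊥, Fˣ)`; by Dedekind's independence of characters `|Hom(M, Fˣ)| ≤ |M|`, so
`[G : A^⊥] = |A|` and `|G| = |A|²`.
-/

theorem card_monoidHom_units_le (M R : Type*) [Group M] [Finite M] [CommRing R] [IsDomain R] :
    Nat.card (M →* Rˣ) ≤ Nat.card M := by
  have := Fintype.ofFinite M
  have := Fintype.ofFinite (M →* Rˣ)
  have hli : LinearIndependent R fun f : M →* Rˣ => fun m => (f m : R) :=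
    (linearIndependent_monoidHom M R).comp (fun f => (Units.coeHom R).comp f)
      fun f g hfg => MonoidHom.ext fun m => Units.ext (DFunLike.congr_fun hfg m)
  simpa [Nat.card_eq_fintype_card, Module.finrank_fintype_fun_eq_card] using
    hli.fintype_card_le_finrank

namespace IsSkewSymmetricBicharacter

variable {F G : Type} [Field F] [CommGroup G] {θ : G → G → Fˣ}
  (hθ : IsSkewSymmetricBicharacter F G θ)

theorem apply_swap (hθ : IsSkewSymmetricBicharacter F G θ) (g h : G) : θ h g = (θ g h)⁻¹ :=
  eq_inv_of_mul_eq_one_right (hθ.skew g h)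

theorem apply_eq_one_comm (hθ : IsSkewSymmetricBicharacter F G θ) {g h : G} :
    θ g h = 1 ↔ θ h g = 1 := by
  rw [hθ.apply_swap g h, inv_eq_one]

def toDual : G →* G →* Fˣ :=
  MonoidHom.mk' (fun g => MonoidHom.mk' (θ g) (hθ.mul_right g))
    fun g₁ g₂ => MonoidHom.ext fun h => hθ.mul_left h g₁ g₂

@[simp] theorem toDual_apply (g h : G) : hθ.toDual g h = θ g h := rfl

theorem toDual_injective (hnd : BicharNondegenerate θ) : Function.Injective hθ.toDual := by
  refine (injective_iff_map_eq_one _).2 fun g hg => ?_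
  by_contra hg1
  obtain ⟨h, hh⟩ := hnd g hg1
  exact hh (DFunLike.congr_fun hg h)

def diag : G →* Fˣ :=
  MonoidHom.mk' (fun g => θ g g) fun a b => by
    rw [hθ.mul_left, hθ.mul_right, hθ.mul_right, hθ.apply_swap a b]
    group

@[simp] theorem diag_apply (g : G) : hθ.diag g = θ g g := rfl

theorem index_ker_diag_le_two : hθ.diag.ker.index ≤ 2 := by
  have hrange : hθ.diag.range ≤ rootsOfUnity 2 F := by
    rintro _ ⟨g, rfl⟩
    rw [mem_rootsOfUnity, diag_apply, sq, hθ.skew]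
  rw [Subgroup.index_ker]
  exact (Subgroup.card_le_of_le hrange).trans (card_rootsOfUnity F 2)

def orth (S : Set G) : Subgroup G :=
  ⨅ a ∈ S, (hθ.toDual a).ker

theorem mem_orth {S : Set G} {x : G} : x ∈ hθ.orth S ↔ ∀ a ∈ S, θ a x = 1 := by
  simp [orth, Subgroup.mem_iInf]

theorem orth_closure (S : Set G) : hθ.orth (Subgroup.closure S) = hθ.orth S := by
  ext x
  simp only [mem_orth]
  exact ⟨fun h a ha => h a (Subgroup.subset_closure ha),
    fun h => (Subgroup.closure_le (hθ.toDual.flip x).ker).2 h⟩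

theorem orth_eq_of_maximal (halt : ∀ g, θ g g = 1) {A : Subgroup G}
    (hA : Maximal (fun B : Subgroup G => B ≤ hθ.orth B) A) : hθ.orth A = A := by
  refine le_antisymm (fun x hx => ?_) hA.prop
  have hAx : Subgroup.closure (insert x A) ≤ hθ.orth (Subgroup.closure (insert x A)) := by
    rw [orth_closure, Subgroup.closure_le]
    intro a ha
    rw [SetLike.mem_coe, mem_orth]
    intro b hb
    rcases ha with rfl | ha <;> rcases hb with rfl | hb
    · exact halt _
    · exact hθ.mem_orth.1 hx b hb
    · exact hθ.apply_eq_one_comm.1 (hθ.mem_orth.1 hx a ha)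
    · exact hθ.mem_orth.1 (hA.prop ha) b hb
  exact hA.2 hAx (fun a ha => Subgroup.subset_closure (Set.mem_insert_of_mem x ha))
    (Subgroup.subset_closure (Set.mem_insert x _))

theorem index_orth_le_card (A : Subgroup G) [Finite A] : (hθ.orth A).index ≤ Nat.card A := by
  let ρ := (MonoidHom.domRestrictHom A Fˣ).comp hθ.toDual
  have hker : ρ.ker = hθ.orth A := by
    ext x
    simp [ρ, mem_orth, MonoidHom.ext_iff, hθ.apply_eq_one_comm]
  rw [← hker, Subgroup.index_ker]
  exact ρ.range.card_le_card_group.trans (card_monoidHom_units_le A F)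

theorem card_le_index_orth [Finite G] (hnd : BicharNondegenerate θ) (A : Subgroup G) :
    Nat.card A ≤ (hθ.orth A).index := by
  let ψ : A → (G ⧸ hθ.orth A →* Fˣ) := fun a =>
    QuotientGroup.lift _ (hθ.toDual a) fun x hx => hθ.mem_orth.1 hx a a.2
  have hψ : Function.Injective ψ := fun a b hab => Subtype.ext <|
    hθ.toDual_injective hnd <| MonoidHom.ext fun x => DFunLike.congr_fun hab (x : G ⧸ _)
  rw [Subgroup.index_eq_card]
  exact (Nat.card_le_card_of_injective ψ hψ).trans (card_monoidHom_units_le _ F)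

theorem card_eq_mul_self_of_orth_eq [Finite G] (hnd : BicharNondegenerate θ) {A : Subgroup G}
    (hA : hθ.orth A = A) : Nat.card G = Nat.card A * Nat.card A := by
  have hindex := le_antisymm (hθ.index_orth_le_card A) (hθ.card_le_index_orth hnd A)
  rw [← (hθ.orth A).card_mul_index, hindex, hA]

theorem exists_card_eq_mul_self [Finite G] (hθ : IsSkewSymmetricBicharacter F G θ)
    (hnd : BicharNondegenerate θ) (halt : ∀ g, θ g g = 1) : ∃ m, Nat.card G = m * m := by
  obtain ⟨A, -, hA⟩ := Finite.exists_le_maximal (p := fun B : Subgroup G => B ≤ hθ.orth B) bot_le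
  exact ⟨_, hθ.card_eq_mul_self_of_orth_eq hnd (hθ.orth_eq_of_maximal halt hA)⟩

end IsSkewSymmetricBicharacter

theorem diag_kernel_subgroup_general (F : Type) [Field F]
    (G : Type) [CommGroup G] [Fintype G] (θ : G → G → Fˣ)
    (hθ : IsSkewSymmetricBicharacter F G θ) (hnd : BicharNondegenerate θ) :
    ∃ H : Subgroup G, (∀ g : G, g ∈ H ↔ θ g g = 1) ∧
      ((H = ⊤ ∧ ∃ m : ℕ, Fintype.card G = m * m) ∨ H.index = 2) := by
  refine ⟨hθ.diag.ker, fun g => MonoidHom.mem_ker, ?_⟩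
  by_cases htop : hθ.diag.ker = ⊤
  · refine Or.inl ⟨htop, ?_⟩
    rw [← Nat.card_eq_fintype_card]
    exact hθ.exists_card_eq_mul_self hnd fun g => hθ.diag.mem_ker.1 (htop ▸ Subgroup.mem_top g)
  · have hne_one : hθ.diag.ker.index ≠ 1 := mt Subgroup.index_eq_one.1 htop
    have hne_zero : hθ.diag.ker.index ≠ 0 := Subgroup.index_ne_zero_of_finite
    have hle_two := hθ.index_ker_diag_le_two
    exact Or.inr (by omega)

/-- for a nondegenerate skew-symmetric bicharacter `θ` on a finite abelian
group `G`, the set `H = {g : θ(g,g) = 1}` is a subgroup, and either `H = G`, in which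
case `|G|` is a perfect square, or `[G : H] = 2`. -/
theorem diag_kernel_subgroup (F : Type) [Field F] [IsAlgClosed F] [CharZero F]
    (G : Type) [CommGroup G] [Fintype G] (θ : G → G → Fˣ)
    (hθ : IsSkewSymmetricBicharacter F G θ) (hnd : BicharNondegenerate θ) :
    ∃ H : Subgroup G, (∀ g : G, g ∈ H ↔ θ g g = 1) ∧
      ((H = ⊤ ∧ ∃ m : ℕ, Fintype.card G = m * m) ∨ H.index = 2) :=
  diag_kernel_subgroup_general F G θ hθ hnd
end
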